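/- Let a ∈ (0, 1/2) and consider the function f(y) = y^{−a} on (0,1]. For the β-graded mesh with nodes y_k = (k/N)^β (β ≥ 1) and piecewise-constant interpolant Π⁰f given on each interval (y_{k−1}, y_k] by the mean value of f, the L²(0,1)-error satisfies ‖f − Π⁰f‖_{L²(0,1)} ≤ C · N^{−min{β(1/2 − a), 1}} for a constant C independent of N (with an arbitrarily small loss ε > 0 in the exponent in the limiting case). -/

import Mathlib

/-!
On a cell `(x, y]` with `0 < x` the function `z ^ (-a)` is monotone, so its mean lies between
its endpoint values and the squared error is at most
`(y - x) (x^{-a} - y^{-a})² ≤ (y - x)³ x^{-2a-2}`.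
On the graded mesh, for `k ≥ 2`, `y_{k-1} ≥ 2^{-β} y_k` and `y_k - y_{k-1} ≤ β y_k / k`, so the
`k`-th cell contributes `O(k^{q-3} N^{-q})` with `q = β (1 - 2a)`. On the first cell the error is
at most the second moment, `O(N^{-q})`. Finally `k^{q-3} ≤ N^{max(q-2, 0)} k^{δ-1}` and
`∑_{k ≤ N} k^{δ-1} ≤ N^δ / δ` by comparison with an integral; the loss `δ` absorbs the logarithm
of the case `q = 2`.
-/

open Real MeasureTheory Set

/-- `‖f - Π⁰f‖²` on the cell `(x, y]`, where `Π⁰f` is the mean value of `f` over the cell. -/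
noncomputable def sqErrorOfMean (f : ℝ → ℝ) (x y : ℝ) : ℝ :=
  ∫ z in Ioc x y, (f z - (y - x)⁻¹ * ∫ w in Ioc x y, f w) ^ 2

lemma mean_mem_Icc_of_forall_mem_Icc {f : ℝ → ℝ} {x y m M : ℝ} (hxy : x < y)
    (hf : IntegrableOn f (Ioc x y)) (hbd : ∀ z ∈ Ioc x y, f z ∈ Icc m M) :
    (y - x)⁻¹ * ∫ z in Ioc x y, f z ∈ Icc m M := by
  have hmean := (convex_Icc m M).set_average_mem isClosed_Icc
    (by simp [hxy]) (by simp) ((ae_restrict_iff' measurableSet_Ioc).2 (.of_forall hbd)) hf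
  rwa [setAverage_eq, volume_real_Ioc_of_le hxy.le, smul_eq_mul] at hmean

lemma sqErrorOfMean_le_of_forall_mem_Icc {f : ℝ → ℝ} {x y m M : ℝ} (hxy : x < y)
    (hf : IntegrableOn f (Ioc x y)) (hbd : ∀ z ∈ Ioc x y, f z ∈ Icc m M) :
    sqErrorOfMean f x y ≤ (y - x) * (M - m) ^ 2 := by
  obtain ⟨hmc, hcM⟩ := mean_mem_Icc_of_forall_mem_Icc hxy hf hbd
  calc sqErrorOfMean f x y ≤ ∫ _ in Ioc x y, (M - m) ^ 2 := by
        refine integral_mono_of_nonneg (.of_forall fun _ => sq_nonneg _)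
          (integrableOn_const (by simp)) ((ae_restrict_iff' measurableSet_Ioc).2 (.of_forall ?_))
        intro z hz
        obtain ⟨hmz, hzM⟩ := hbd z hz
        exact sq_le_sq' (by linarith) (by linarith)
    _ = (y - x) * (M - m) ^ 2 := by
        rw [setIntegral_const, volume_real_Ioc_of_le hxy.le, smul_eq_mul]

lemma sqErrorOfMean_le_integral_sq {f : ℝ → ℝ} {x y : ℝ} (hxy : x < y)
    (hf : IntegrableOn f (Ioc x y)) (hf2 : IntegrableOn (fun z => f z ^ 2) (Ioc x y)) :
    sqErrorOfMean f x y ≤ ∫ z in Ioc x y, f z ^ 2 := by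
  set c := (y - x)⁻¹ * ∫ z in Ioc x y, f z with hc
  have hconst : ∀ r : ℝ, IntegrableOn (fun _ => r) (Ioc x y) := fun _ =>
    integrableOn_const (by simp)
  have hint : ∫ z in Ioc x y, f z = (y - x) * c := by
    rw [hc, ← mul_assoc, mul_inv_cancel₀ (sub_pos.2 hxy).ne', one_mul]
  have hexpand : sqErrorOfMean f x y = (∫ z in Ioc x y, f z ^ 2) - (y - x) * c ^ 2 := by
    calc sqErrorOfMean f x y = ∫ z in Ioc x y, (f z ^ 2 - (2 * c * f z - c ^ 2)) := by
          simp only [sqErrorOfMean, ← hc]; congr 1; ext z; ring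
      _ = (∫ z in Ioc x y, f z ^ 2) - 2 * c * (∫ z in Ioc x y, f z) + (y - x) * c ^ 2 := by
          rw [integral_sub (g := fun z => 2 * c * f z - c ^ 2) hf2
              ((hf.const_mul _).sub (hconst _)), integral_sub (hf.const_mul _) (hconst _),
            integral_const_mul, setIntegral_const, volume_real_Ioc_of_le hxy.le, smul_eq_mul]
          ring
      _ = (∫ z in Ioc x y, f z ^ 2) - (y - x) * c ^ 2 := by rw [hint]; ring
  rw [hexpand]
  have : 0 ≤ (y - x) * c ^ 2 := mul_nonneg (sub_pos.2 hxy).le (sq_nonneg c)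
  linarith

lemma rpow_neg_sub_rpow_neg_le {a x y : ℝ} (ha1 : a ≤ 1) (hx : 0 < x) (hxy : x ≤ y) :
    x ^ (-a) - y ^ (-a) ≤ x ^ (-a - 1) * (y - x) := by
  have hy : 0 < y := hx.trans_le hxy
  have hratio : x / y ≤ (x / y) ^ a :=
    self_le_rpow_of_le_one (div_nonneg hx.le hy.le) ((div_le_one hy).2 hxy) ha1
  have hy_eq : y ^ (-a) = x ^ (-a) * (x / y) ^ a := by
    rw [div_rpow hx.le hy.le, rpow_neg hx.le, rpow_neg hy.le]
    field_simp
  have hxa : 0 < x ^ (-a) := rpow_pos_of_pos hx _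
  calc x ^ (-a) - y ^ (-a) ≤ x ^ (-a) * (1 - x / y) := by
        rw [hy_eq, mul_sub, mul_one]; gcongr
    _ = x ^ (-a) * ((y - x) / y) := by field_simp
    _ ≤ x ^ (-a) * ((y - x) / x) := by gcongr
    _ = x ^ (-a - 1) * (y - x) := by rw [rpow_sub_one hx.ne']; ring

lemma rpow_sub_rpow_le_mul_rpow_sub_one {β u v : ℝ} (hβ : 1 ≤ β) (hu : 0 ≤ u) (huv : u ≤ v) :
    v ^ β - u ^ β ≤ β * v ^ (β - 1) * (v - u) := by
  rcases huv.eq_or_lt with rfl | huv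
  · simp
  have hv : 0 < v := hu.trans_lt huv
  have bernoulli := one_add_mul_self_le_rpow_one_add (s := u / v - 1) (by
    linarith [div_nonneg hu hv.le]) hβ
  rw [add_sub_cancel, div_rpow hu hv.le, le_div_iff₀ (rpow_pos_of_pos hv β)] at bernoulli
  rw [rpow_sub_one hv.ne']
  have : β * (u / v - 1) * v ^ β = - (β * (v ^ β / v) * (v - u)) := by field_simp; ring
  nlinarith

lemma sqErrorOfMean_rpow_neg_zero_le {a t : ℝ} (ha : a < 1 / 2) (ht : 0 < t) :
    sqErrorOfMean (fun z => z ^ (-a)) 0 t ≤ t ^ (1 - 2 * a) / (1 - 2 * a) := by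
  have hint : ∀ r : ℝ, -1 < r → IntegrableOn (fun z => z ^ r) (Ioc 0 t) := fun r hr =>
    (intervalIntegrable_iff_integrableOn_Ioc_of_le ht.le).1
      (intervalIntegral.intervalIntegrable_rpow' hr)
  have hsq : EqOn (fun z => z ^ (-(2 * a))) (fun z => (z ^ (-a)) ^ 2) (Ioc 0 t) := fun z hz => by
    simp only [← rpow_natCast, ← rpow_mul hz.1.le]; ring_nf
  refine (sqErrorOfMean_le_integral_sq ht (hint _ (by linarith))
    ((hint _ (by linarith)).congr_fun hsq measurableSet_Ioc)).trans_eq ?_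
  rw [← setIntegral_congr_fun measurableSet_Ioc hsq, ← intervalIntegral.integral_of_le ht.le,
    integral_rpow (.inl (by linarith)), zero_rpow (by linarith)]
  ring_nf

lemma sqErrorOfMean_rpow_neg_le {a x y : ℝ} (ha0 : 0 ≤ a) (ha1 : a ≤ 1) (hx : 0 < x)
    (hxy : x < y) : sqErrorOfMean (fun z => z ^ (-a)) x y ≤ (x ^ (-a - 1)) ^ 2 * (y - x) ^ 3 := by
  have hbd : ∀ z ∈ Ioc x y, z ^ (-a) ∈ Icc (y ^ (-a)) (x ^ (-a)) := fun z hz =>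
    ⟨rpow_le_rpow_of_nonpos (hx.trans hz.1) hz.2 (by linarith),
      rpow_le_rpow_of_nonpos hx hz.1.le (by linarith)⟩
  have hdiff := rpow_neg_sub_rpow_neg_le ha1 hx hxy.le
  have hdiff0 : 0 ≤ x ^ (-a) - y ^ (-a) := by linarith [(hbd y ⟨hxy, le_rfl⟩).2]
  calc sqErrorOfMean (fun z => z ^ (-a)) x y ≤ (y - x) * (x ^ (-a) - y ^ (-a)) ^ 2 :=
        sqErrorOfMean_le_of_forall_mem_Icc hxy ((intervalIntegrable_iff_integrableOn_Ioc_of_le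
          hxy.le).1 (intervalIntegral.intervalIntegrable_rpow (.inr fun h0 => by
            rw [uIcc_of_le hxy.le] at h0; exact hx.not_ge h0.1))) hbd
    _ ≤ (y - x) * (x ^ (-a - 1) * (y - x)) ^ 2 := by gcongr
    _ = (x ^ (-a - 1)) ^ 2 * (y - x) ^ 3 := by ring

lemma sqErrorOfMean_rpow_neg_graded_le {a β k N : ℝ} (ha0 : 0 ≤ a) (ha1 : a ≤ 1) (hβ : 1 ≤ β)
    (hk : 2 ≤ k) (hN : 0 < N) :
    sqErrorOfMean (fun z => z ^ (-a)) (((k - 1) / N) ^ β) ((k / N) ^ β)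
      ≤ β ^ 3 * 2 ^ (2 * β * (a + 1)) * k ^ (β * (1 - 2 * a) - 3) * N ^ (-(β * (1 - 2 * a))) := by
  have hk0 : 0 < k := by linarith
  have hv : 0 < k / N := div_pos hk0 hN
  have hu : 0 < (k - 1) / N := div_pos (by linarith) hN
  set w := (k / N) ^ β with hw
  have hw0 : 0 < w := rpow_pos_of_pos hv β
  have hxw : ((k - 1) / N) ^ β < w := rpow_lt_rpow hu.le (by gcongr; linarith) (by linarith)
  have hx : w / 2 ^ β ≤ ((k - 1) / N) ^ β := by
    rw [hw, ← div_rpow hv.le zero_le_two]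
    refine rpow_le_rpow (by positivity) ?_ (by linarith)
    rw [div_right_comm]
    gcongr
    linarith
  have hlen : w - ((k - 1) / N) ^ β ≤ β * w / k := by
    refine (rpow_sub_rpow_le_mul_rpow_sub_one hβ hu.le (by gcongr; linarith)).trans_eq ?_
    rw [hw, rpow_sub_one hv.ne']
    field_simp
    ring
  have hpow : (((k - 1) / N) ^ β) ^ (-a - 1) ≤ 2 ^ (β * (a + 1)) * w ^ (-a - 1) := by
    refine (rpow_le_rpow_of_nonpos (by positivity) hx (by linarith)).trans_eq ?_
    rw [div_rpow hw0.le (by positivity), ← rpow_mul zero_le_two,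
      show β * (-a - 1) = -(β * (a + 1)) by ring, rpow_neg zero_le_two, div_inv_eq_mul, mul_comm]
  have hw_pow : (w ^ (-a - 1)) ^ 2 * w ^ 3 = k ^ (β * (1 - 2 * a)) * N ^ (-(β * (1 - 2 * a))) := by
    rw [← rpow_natCast, ← rpow_natCast, ← rpow_mul hw0.le, ← rpow_add hw0, hw, ← rpow_mul hv.le,
      div_rpow hk0.le hN.le, rpow_neg hN.le, div_eq_mul_inv]
    ring_nf
  have hk_pow : k ^ (β * (1 - 2 * a) - 3) = k ^ (β * (1 - 2 * a)) / k ^ 3 := by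
    rw [rpow_sub hk0, rpow_ofNat]
  calc sqErrorOfMean (fun z => z ^ (-a)) (((k - 1) / N) ^ β) w
      ≤ ((((k - 1) / N) ^ β) ^ (-a - 1)) ^ 2 * (w - ((k - 1) / N) ^ β) ^ 3 :=
        sqErrorOfMean_rpow_neg_le ha0 ha1 (rpow_pos_of_pos hu β) hxw
    _ ≤ (2 ^ (β * (a + 1)) * w ^ (-a - 1)) ^ 2 * (β * w / k) ^ 3 := by
        gcongr
    _ = β ^ 3 * (2 ^ (β * (a + 1))) ^ 2 * ((w ^ (-a - 1)) ^ 2 * w ^ 3) / k ^ 3 := by ring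
    _ = _ := by
        rw [hw_pow, hk_pow, show (2 : ℝ) ^ (2 * β * (a + 1)) = (2 ^ (β * (a + 1))) ^ 2 by
          rw [← rpow_mul_natCast zero_le_two]; ring_nf]
        ring

lemma sum_Ioc_one_rpow_le {r : ℝ} (hr1 : -1 < r) (hr0 : r ≤ 0) {N : ℕ} (hN : 1 ≤ N) :
    ∑ k ∈ Finset.Ioc 1 N, (k : ℝ) ^ r ≤ ((N : ℝ) ^ (r + 1) - 1) / (r + 1) := by
  have hanti : AntitoneOn (fun x : ℝ => x ^ r) (Icc (1 : ℕ) N) :=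
    (antitoneOn_rpow_Ioi_of_exponent_nonpos hr0).mono fun x hx => by
      simp only [Nat.cast_one] at hx; exact zero_lt_one.trans_le hx.1
  have hsum := hanti.sum_le_integral_Ico hN
  rw [Finset.sum_Ico_add' (fun k : ℕ => (k : ℝ) ^ r), Finset.Ico_add_one_add_one_eq_Ioc,
    integral_rpow (.inl hr1)] at hsum
  simpa using hsum

lemma sum_Ioc_sqErrorOfMean_rpow_neg_graded_le {a β δ : ℝ} (ha0 : 0 ≤ a) (ha1 : a ≤ 1)
    (hβ : 1 ≤ β) (hδ0 : 0 < δ) (hδ1 : δ ≤ 1) {N : ℕ} (hN : 1 ≤ N) :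
    ∑ k ∈ Finset.Ioc 1 N,
        sqErrorOfMean (fun y => y ^ (-a)) ((((k : ℝ) - 1) / N) ^ β) (((k : ℝ) / N) ^ β)
      ≤ β ^ 3 * 2 ^ (2 * β * (a + 1)) / δ *
          (N : ℝ) ^ (max (β * (1 - 2 * a) - 2) 0 - β * (1 - 2 * a) + δ) := by
  set q := β * (1 - 2 * a)
  set M := max (q - 2) 0
  set C₁ := β ^ 3 * 2 ^ (2 * β * (a + 1))
  have hN0 : (0 : ℝ) < N := by exact_mod_cast hN
  have hcell : ∀ k ∈ Finset.Ioc 1 N,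
      sqErrorOfMean (fun y => y ^ (-a)) ((((k : ℝ) - 1) / N) ^ β) (((k : ℝ) / N) ^ β)
        ≤ C₁ * (N : ℝ) ^ (M - q) * (k : ℝ) ^ (δ - 1) := by
    intro k hk
    obtain ⟨hk1, hkN⟩ := Finset.mem_Ioc.1 hk
    have hk2 : (2 : ℝ) ≤ k := by exact_mod_cast hk1
    have hkN' : (k : ℝ) ≤ N := by exact_mod_cast hkN
    have hkpow : (k : ℝ) ^ (q - 3) ≤ (N : ℝ) ^ M * (k : ℝ) ^ (δ - 1) :=
      calc (k : ℝ) ^ (q - 3) ≤ (k : ℝ) ^ (M + (δ - 1)) :=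
            rpow_le_rpow_of_exponent_le (by linarith) (by linarith [le_max_left (q - 2) 0])
        _ = (k : ℝ) ^ M * (k : ℝ) ^ (δ - 1) := rpow_add (by linarith) _ _
        _ ≤ (N : ℝ) ^ M * (k : ℝ) ^ (δ - 1) := by gcongr
    calc _ ≤ C₁ * (k : ℝ) ^ (q - 3) * (N : ℝ) ^ (-q) :=
          sqErrorOfMean_rpow_neg_graded_le ha0 ha1 hβ hk2 hN0
      _ ≤ C₁ * ((N : ℝ) ^ M * (k : ℝ) ^ (δ - 1)) * (N : ℝ) ^ (-q) := by gcongr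
      _ = C₁ * (N : ℝ) ^ (M - q) * (k : ℝ) ^ (δ - 1) := by
          rw [sub_eq_add_neg M, rpow_add hN0]; ring
  calc _ ≤ ∑ k ∈ Finset.Ioc 1 N, C₁ * (N : ℝ) ^ (M - q) * (k : ℝ) ^ (δ - 1) :=
        Finset.sum_le_sum hcell
    _ = C₁ * (N : ℝ) ^ (M - q) * ∑ k ∈ Finset.Ioc 1 N, (k : ℝ) ^ (δ - 1) := by
        rw [Finset.mul_sum]
    _ ≤ C₁ * (N : ℝ) ^ (M - q) * (((N : ℝ) ^ (δ - 1 + 1) - 1) / (δ - 1 + 1)) := by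
        gcongr
        exact sum_Ioc_one_rpow_le (by linarith) (by linarith) hN
    _ ≤ C₁ * (N : ℝ) ^ (M - q) * ((N : ℝ) ^ δ / δ) := by
        rw [sub_add_cancel]; gcongr; linarith
    _ = C₁ / δ * (N : ℝ) ^ (M - q + δ) := by rw [rpow_add hN0]; ring

lemma sum_sqErrorOfMean_rpow_neg_graded_le {a β ε : ℝ} (ha0 : 0 ≤ a) (ha1 : a < 1 / 2)
    (hβ : 1 ≤ β) (hε : 0 < ε) :
    ∃ C, 0 < C ∧ ∀ N : ℕ, 1 ≤ N →
      ∑ k ∈ Finset.Icc 1 N,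
          sqErrorOfMean (fun y => y ^ (-a)) ((((k : ℝ) - 1) / N) ^ β) (((k : ℝ) / N) ^ β)
        ≤ C * ((N : ℝ) ^ (-(min (β * (1 / 2 - a)) 1) + ε)) ^ 2 := by
  set q := β * (1 - 2 * a)
  set M := max (q - 2) 0 with hM
  set δ := min (2 * ε) 1
  have h2a : 0 < 1 - 2 * a := by linarith
  have hδ0 : 0 < δ := lt_min (by linarith) one_pos
  have hexp : M - q + δ ≤ 2 * (-(min (β * (1 / 2 - a)) 1) + ε) := by
    have : δ ≤ 2 * ε := min_le_left _ _
    rw [show β * (1 / 2 - a) = q / 2 by ring]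
    rcases le_total q 2 with h | h
    · rw [hM, max_eq_right (by linarith), min_eq_left (by linarith)]; linarith
    · rw [hM, max_eq_left (by linarith), min_eq_right (by linarith)]; linarith
  set C₁ := β ^ 3 * 2 ^ (2 * β * (a + 1))
  have hC : 0 < 1 / (1 - 2 * a) + C₁ / δ := by positivity
  refine ⟨_, hC, fun N hN => ?_⟩
  have hN0 : (0 : ℝ) < N := by exact_mod_cast hN
  have hfirst : sqErrorOfMean (fun y => y ^ (-a)) (((((1 : ℕ) : ℝ) - 1) / N) ^ β)
      ((((1 : ℕ) : ℝ) / N) ^ β) ≤ 1 / (1 - 2 * a) * (N : ℝ) ^ (M - q + δ) := by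
    simp only [Nat.cast_one, sub_self, zero_div, zero_rpow (by linarith : β ≠ 0)]
    have hpow : ((1 / (N : ℝ)) ^ β) ^ (1 - 2 * a) = (N : ℝ) ^ (-q) := by
      rw [← rpow_mul (by positivity), one_div, inv_rpow hN0.le, ← rpow_neg hN0.le]
    calc _ ≤ ((1 / (N : ℝ)) ^ β) ^ (1 - 2 * a) / (1 - 2 * a) :=
          sqErrorOfMean_rpow_neg_zero_le ha1 (by positivity)
      _ = 1 / (1 - 2 * a) * (N : ℝ) ^ (-q) := by rw [hpow]; ring
      _ ≤ 1 / (1 - 2 * a) * (N : ℝ) ^ (M - q + δ) := by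
          gcongr
          · exact_mod_cast hN
          · linarith [le_max_right (q - 2) 0]
  rw [Finset.Icc_eq_cons_Ioc hN, Finset.sum_cons]
  calc _ ≤ (1 / (1 - 2 * a) + C₁ / δ) * (N : ℝ) ^ (M - q + δ) := by
        rw [add_mul]
        exact add_le_add hfirst (sum_Ioc_sqErrorOfMean_rpow_neg_graded_le ha0 (by linarith) hβ
          hδ0 (min_le_right _ _) hN)
    _ ≤ _ := by
        rw [← rpow_mul_natCast hN0.le]
        gcongr
        · exact_mod_cast hN
        · push_cast; linarith

/-- Lemma 7 (s = 0 case): L² error of the piecewise-constant (mean value) approximation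
of y^{-a}, 0 < a < 1/2, on the β-graded mesh y_k = (k/N)^β, β ≥ 1:
‖f - Π⁰f‖_{L²(0,1)} ≤ C · N^{-min{β(1/2-a),1} + ε} for every ε > 0, C independent of N. -/
theorem stmt_5 (a β : ℝ) (ha0 : 0 < a) (ha1 : a < 1/2) (hβ : 1 ≤ β) :
    ∀ ε : ℝ, 0 < ε → ∃ C : ℝ, 0 < C ∧ ∀ N : ℕ, 1 ≤ N →
      Real.sqrt (∑ k ∈ Finset.Icc 1 N,
        ∫ y in Set.Ioc ((((k:ℝ) - 1)/N) ^ β) (((k:ℝ)/N) ^ β),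
          (y ^ (-a) - (((k:ℝ)/N) ^ β - (((k:ℝ) - 1)/N) ^ β)⁻¹ *
            ∫ z in Set.Ioc ((((k:ℝ) - 1)/N) ^ β) (((k:ℝ)/N) ^ β), z ^ (-a))^2)
      ≤ C * (N:ℝ) ^ (-(min (β*(1/2 - a)) 1) + ε) := by
  intro ε hε
  obtain ⟨C, hC, hsum⟩ := sum_sqErrorOfMean_rpow_neg_graded_le ha0.le ha1 hβ hε
  refine ⟨√C, sqrt_pos.2 hC, fun N hN => (sqrt_le_sqrt (hsum N hN)).trans_eq ?_⟩
  rw [sqrt_mul hC.le, sqrt_sq (rpow_nonneg (Nat.cast_nonneg N) _)]
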